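/- arXiv:2412.19144 — 2 statements merged into one kernel-verified Lean document; each statement's English description precedes it below -/
import Mathlib

section
/- Let G be a graph with no isolated vertices and let p : H₁ → H₂ be a 2-covering map of graphs. Then the induced monotone map p_* : Hom(G,H₁) → Hom(G,H₂), defined by (p_*η)(x) = p(η(x)), is a poset covering map. -/
structure Graph' where
  V : Type
  E : V → V → Prop
  symm : ∀ {x y}, E x y → E y x

def IsGraphHom (G H : Graph') (f : G.V → H.V) : Prop :=
  ∀ {x y}, G.E x y → H.E (f x) (f y)

structure Walk (G : Graph') (a b : G.V) where
  len : ℕ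
  toFun : ℕ → G.V
  start_eq : toFun 0 = a
  end_eq : toFun len = b
  adj : ∀ i, i < len → G.E (toFun i) (toFun (i + 1))

structure MultiHom (G H : Graph') where
  toFun : G.V → Set H.V
  nonempty : ∀ x, (toFun x).Nonempty
  edge : ∀ {x y}, G.E x y → ∀ a ∈ toFun x, ∀ b ∈ toFun y, H.E a b

def MultiHom.le {G H : Graph'} (η η' : MultiHom G H) : Prop :=
  ∀ x, η.toFun x ⊆ η'.toFun x

def SameComponent {G H : Graph'} (η η' : MultiHom G H) : Prop :=
  Relation.ReflTransGen (fun a b => MultiHom.le a b ∨ MultiHom.le b a) η η'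

def ofHom {G H : Graph'} (f : G.V → H.V) (hf : IsGraphHom G H f) : MultiHom G H where
  toFun x := {f x}
  nonempty x := ⟨f x, rfl⟩
  edge := by
    intro x y hxy a ha b hb
    rw [Set.mem_singleton_iff] at ha hb
    subst ha; subst hb
    exact hf hxy

def prodI (G : Graph') (n : ℕ) : Graph' where
  V := G.V × Fin (n + 1)
  E := fun p q => G.E p.1 q.1 ∧ p.2.val ≤ q.2.val + 1 ∧ q.2.val ≤ p.2.val + 1
  symm := by
    rintro p q ⟨h1, h2, h3⟩
    exact ⟨G.symm h1, h3, h2⟩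

def MoveA {G : Graph'} {a b : G.V} (γ δ : Walk G a b) : Prop :=
  δ.len = γ.len + 2 ∧ ∃ k ≤ γ.len,
    (∀ i ≤ k, δ.toFun i = γ.toFun i) ∧
    (∀ i, k ≤ i → i ≤ γ.len → δ.toFun (i + 2) = γ.toFun i)

def MoveB {G : Graph'} {a b : G.V} (γ δ : Walk G a b) : Prop :=
  γ.len = δ.len ∧ ∃ j, ∀ i ≤ γ.len, i ≠ j → γ.toFun i = δ.toFun i

def Eqv1 {G : Graph'} {a b : G.V} : Walk G a b → Walk G a b → Prop :=
  Relation.EqvGen MoveA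

def Eqv2 {G : Graph'} {a b : G.V} : Walk G a b → Walk G a b → Prop :=
  Relation.EqvGen (fun γ δ => MoveA γ δ ∨ MoveB γ δ)

noncomputable def Graph'.dist (G : Graph') (a b : G.V) : ℕ :=
  sInf {n | ∃ γ : Walk G a b, γ.len = n}

def Graph'.Connected (G : Graph') : Prop := ∀ a b : G.V, Nonempty (Walk G a b)

def Graph'.Bipartite (G : Graph') : Prop :=
  ∃ c : G.V → ZMod 2, ∀ {x y}, G.E x y → c x ≠ c y

def constWalk {G : Graph'} (a : G.V) : Walk G a a :=
  ⟨0, fun _ => a, rfl, rfl, fun i hi => absurd hi (by omega)⟩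

def Walk.concat {G : Graph'} {a b c : G.V} (γ : Walk G a b) (δ : Walk G b c) :
    Walk G a c where
  len := γ.len + δ.len
  toFun i := if i ≤ γ.len then γ.toFun i else δ.toFun (i - γ.len)
  start_eq := by simp [γ.start_eq]
  end_eq := by
    by_cases h : δ.len = 0
    · have hbc : b = c := by
        have h1 := δ.end_eq
        rw [h, δ.start_eq] at h1
        exact h1
      simp [h, γ.end_eq, hbc]
    · have h1 : ¬ (γ.len + δ.len ≤ γ.len) := by omega
      try dsimp only
      rw [if_neg h1]
      have h2 : γ.len + δ.len - γ.len = δ.len := by omega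
      rw [h2, δ.end_eq]
  adj := by
    intro i hi
    try dsimp only
    rcases lt_trichotomy i γ.len with h | h | h
    · rw [if_pos (by omega : i ≤ γ.len), if_pos (by omega : i + 1 ≤ γ.len)]
      exact γ.adj i h
    · have hδ : 0 < δ.len := by omega
      rw [if_pos (by omega : i ≤ γ.len), if_neg (by omega : ¬ i + 1 ≤ γ.len)]
      have h2 : i + 1 - γ.len = 1 := by omega
      rw [h2, h, γ.end_eq]
      have h3 := δ.adj 0 hδ
      rw [δ.start_eq] at h3
      exact h3
    · rw [if_neg (by omega : ¬ i ≤ γ.len), if_neg (by omega : ¬ i + 1 ≤ γ.len)]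
      have h2 : i + 1 - γ.len = (i - γ.len) + 1 := by omega
      rw [h2]
      exact δ.adj (i - γ.len) (by omega)

def Walk.reverse {G : Graph'} {a b : G.V} (γ : Walk G a b) : Walk G b a where
  len := γ.len
  toFun i := γ.toFun (γ.len - i)
  start_eq := by simp [γ.end_eq]
  end_eq := by simp [γ.start_eq]
  adj := by
    intro i hi
    have h1 : γ.len - i = (γ.len - (i + 1)) + 1 := by omega
    have h2 := γ.adj (γ.len - (i + 1)) (by omega)
    rw [← h1] at h2
    exact G.symm h2

def Walk.map {G H : Graph'} (f : G.V → H.V) (hf : IsGraphHom G H f) {a b : G.V}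
    (γ : Walk G a b) : Walk H (f a) (f b) where
  len := γ.len
  toFun i := f (γ.toFun i)
  start_eq := by (try dsimp only); rw [γ.start_eq]
  end_eq := by (try dsimp only); rw [γ.end_eq]
  adj := fun i hi => hf (γ.adj i hi)

def Walk.pow {G : Graph'} {a : G.V} (γ : Walk G a a) : ℕ → Walk G a a
  | 0 => constWalk a
  | n + 1 => (Walk.pow γ n).concat γ

def Walk.zpow {G : Graph'} {a : G.V} (γ : Walk G a a) : ℤ → Walk G a a
  | Int.ofNat n => γ.pow n
  | Int.negSucc n => γ.reverse.pow (n + 1)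
def finClip (n t : ℕ) : Fin (n + 1) := ⟨min t n, by omega⟩

def realizedWalk {G H : Graph'} {n : ℕ} (h : (prodI G n).V → H.V)
    (hh : IsGraphHom (prodI G n) H h) {v v' : G.V} (hvv' : G.E v v')
    {w : H.V} (h0 : h (v, finClip n 0) = w) (hN : h (v, finClip n n) = w) :
    Walk H w w where
  len := 2 * n
  toFun i := if i % 2 = 0 then h (v, finClip n (i / 2)) else h (v', finClip n (i / 2))
  start_eq := by
    try dsimp only
    rw [if_pos (by norm_num : (0:ℕ) % 2 = 0), Nat.zero_div]
    exact h0
  end_eq := by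
    try dsimp only
    rw [if_pos (by omega : (2 * n) % 2 = 0)]
    have h2 : 2 * n / 2 = n := by omega
    rw [h2]
    exact hN
  adj := by
    intro i hi
    try dsimp only
    rcases Nat.even_or_odd i with he | ho
    · obtain ⟨t, ht⟩ := he
      rw [if_pos (by omega : i % 2 = 0), if_neg (by omega : ¬ (i + 1) % 2 = 0)]
      have h4 : (i + 1) / 2 = i / 2 := by omega
      rw [h4]
      refine hh ⟨hvv', ?_, ?_⟩ <;> (dsimp only; omega)
    · obtain ⟨t, ht⟩ := ho
      rw [if_neg (by omega : ¬ i % 2 = 0), if_pos (by omega : (i + 1) % 2 = 0)]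
      refine hh ⟨G.symm hvv', ?_, ?_⟩ <;> (dsimp only [finClip]; omega)

def Realizable {G H : Graph'} (f : G.V → H.V) (v : G.V) (ω : Walk H (f v) (f v)) : Prop :=
  ∃ (n : ℕ) (h : (prodI G n).V → H.V) (hh : IsGraphHom (prodI G n) H h)
    (hs : ∀ x, h (x, finClip n 0) = f x) (he : ∀ x, h (x, finClip n n) = f x)
    (v' : G.V) (_ : G.E v v'),
    Eqv2 ω (realizedWalk h hh ‹G.E v v'› (hs v) (he v))
def SquareFree (G : Graph') : Prop :=
  (∀ x, ¬ G.E x x) ∧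
  ¬ ∃ a b c d : G.V, a ≠ b ∧ a ≠ c ∧ a ≠ d ∧ b ≠ c ∧ b ≠ d ∧ c ≠ d ∧
    G.E a b ∧ G.E b c ∧ G.E c d ∧ G.E d a

def nbhd (G : Graph') (v : G.V) : Set G.V := {y | G.E v y}

def nbhd2 (G : Graph') (v : G.V) : Set G.V := {z | ∃ y, G.E v y ∧ G.E y z}

def IsGraphCovering (G H : Graph') (p : G.V → H.V) : Prop :=
  IsGraphHom G H p ∧ ∀ v : G.V, Set.BijOn p (nbhd G v) (nbhd H (p v))

def Is2CoveringMap (G H : Graph') (p : G.V → H.V) : Prop :=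
  IsGraphHom G H p ∧ ∀ v : G.V,
    Set.BijOn p (nbhd G v) (nbhd H (p v)) ∧ Set.BijOn p (nbhd2 G v) (nbhd2 H (p v))

def pushforward {G H1 H2 : Graph'} (p : H1.V → H2.V) (hp : IsGraphHom H1 H2 p)
    (η : MultiHom G H1) : MultiHom G H2 where
  toFun x := p '' η.toFun x
  nonempty x := (η.nonempty x).image p
  edge := by
    rintro x y hxy a ⟨a', ha', rfl⟩ b ⟨b', hb', rfl⟩
    exact hp (η.edge hxy a' ha' b' hb')

def IsCycleWalk {G : Graph'} {a : G.V} (γ : Walk G a a) : Prop :=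
  3 ≤ γ.len ∧ ∀ i j, i < γ.len → j < γ.len → γ.toFun i = γ.toFun j → i = j

def IsTree (T : Graph') : Prop :=
  (∀ x, ¬ T.E x x) ∧ (∀ a b : T.V, Nonempty (Walk T a b)) ∧
    ∀ (a : T.V) (γ : Walk T a a), ¬ IsCycleWalk γ

def IsPath {G : Graph'} {a b : G.V} (γ : Walk G a b) : Prop :=
  ∀ i j, i ≤ γ.len → j ≤ γ.len → γ.toFun i = γ.toFun j → i = j

def OnWalk {G : Graph'} {a b : G.V} (γ : Walk G a b) (y : G.V) : Prop :=
  ∃ i ≤ γ.len, γ.toFun i = y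

def CrossHomotopic (G H : Graph') (f g : G.V → H.V) : Prop :=
  ∃ (n : ℕ) (h : (prodI G n).V → H.V), IsGraphHom (prodI G n) H h ∧
    (∀ x, h (x, finClip n 0) = f x) ∧ (∀ x, h (x, finClip n n) = g x)

def quotGraph (G : Graph') (Γ : Type) [Group Γ] [MulAction Γ G.V] : Graph' where
  V := Quotient (MulAction.orbitRel Γ G.V)
  E := fun α β => ∃ x y : G.V, Quotient.mk (MulAction.orbitRel Γ G.V) x = α ∧
        Quotient.mk (MulAction.orbitRel Γ G.V) y = β ∧ G.E x y
  symm := by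
    rintro α β ⟨x, y, hx, hy, hxy⟩
    exact ⟨y, x, hy, hx, G.symm hxy⟩

/-!
Since `G` has no isolated vertices, two multi-homomorphisms with a common lower or upper bound `η`
have, at every `x`, their values inside one neighbourhood `N(a)` (`a ∈ η z`, `z ~ x`), on which `p`
is injective; so they agree as soon as their pushforwards do. Descending from `η'` to `y ≤ p_* η'`
is done by cutting `η' x` down to `η' x ∩ p⁻¹(y x)`. Ascending from `η` to `y' ≥ p_* η`, one takes
at `x` all `b` over `y' x` adjacent to every vertex of every `η z`, `z ~ x`; injectivity of `p` on
second neighbourhoods is what makes these sets pairwise adjacent and large enough to cover `y' x`.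
-/

@[ext]
lemma MultiHom.ext {G H : Graph'} {η η' : MultiHom G H} (h : ∀ x, η.toFun x = η'.toFun x) :
    η = η' := by
  cases η; cases η'
  congr
  exact funext h

lemma MultiHom.toFun_subset_nbhd {G H : Graph'} (η : MultiHom G H) {x z : G.V} (hxz : G.E x z)
    {a : H.V} (ha : a ∈ η.toFun z) : η.toFun x ⊆ nbhd H a :=
  fun _ hb => H.symm (η.edge hxz _ hb a ha)

lemma pushforward_mono {G H1 H2 : Graph'} {p : H1.V → H2.V} (hp : IsGraphHom H1 H2 p)
    {η η' : MultiHom G H1} (h : η.le η') : (pushforward p hp η).le (pushforward p hp η') :=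
  fun x => Set.image_mono (h x)

lemma Is2CoveringMap.adj_of_adj_map {H1 H2 : Graph'} {p : H1.V → H2.V}
    (hp : Is2CoveringMap H1 H2 p) {c a a' b : H1.V} (hca : H1.E c a) (hca' : H1.E c a')
    (hab : H1.E a b) (h : H2.E (p a') (p b)) : H1.E a' b := by
  obtain ⟨e, hea', hpe⟩ := (hp.2 a').1.surjOn h
  have : e = b := (hp.2 c).2.injOn ⟨a', hca', hea'⟩ ⟨a, hca, hab⟩ hpe
  exact this ▸ hea'

section Uniqueness

variable {G H1 H2 : Graph'} {p : H1.V → H2.V} (hp : IsGraphHom H1 H2 p)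
  (hinj : ∀ v, Set.InjOn p (nbhd H1 v)) (hG : ∀ x : G.V, ∃ y, G.E x y)
include hinj hG

omit hG in
lemma eq_of_pushforward_eq_of_forall_subset_nbhd {ξ₁ ξ₂ : MultiHom G H1}
    (hN : ∀ x, ∃ a, ξ₁.toFun x ⊆ nbhd H1 a ∧ ξ₂.toFun x ⊆ nbhd H1 a)
    (h : pushforward p hp ξ₁ = pushforward p hp ξ₂) : ξ₁ = ξ₂ := by
  refine MultiHom.ext fun x => ?_
  obtain ⟨a, h₁, h₂⟩ := hN x
  exact ((hinj a).image_eq_image_iff h₁ h₂).1 (congrArg (fun η => η.toFun x) h)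

lemma eq_of_pushforward_eq_of_lower_bound {η ξ₁ ξ₂ : MultiHom G H1} (h₁ : η.le ξ₁) (h₂ : η.le ξ₂)
    (h : pushforward p hp ξ₁ = pushforward p hp ξ₂) : ξ₁ = ξ₂ := by
  refine eq_of_pushforward_eq_of_forall_subset_nbhd hp hinj (fun x => ?_) h
  obtain ⟨z, hxz⟩ := hG x
  obtain ⟨a, ha⟩ := η.nonempty z
  exact ⟨a, ξ₁.toFun_subset_nbhd hxz (h₁ z ha), ξ₂.toFun_subset_nbhd hxz (h₂ z ha)⟩

lemma eq_of_pushforward_eq_of_upper_bound {η ξ₁ ξ₂ : MultiHom G H1} (h₁ : ξ₁.le η) (h₂ : ξ₂.le η)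
    (h : pushforward p hp ξ₁ = pushforward p hp ξ₂) : ξ₁ = ξ₂ := by
  refine eq_of_pushforward_eq_of_forall_subset_nbhd hp hinj (fun x => ?_) h
  obtain ⟨z, hxz⟩ := hG x
  obtain ⟨a, ha⟩ := η.nonempty z
  have hη := η.toFun_subset_nbhd hxz ha
  exact ⟨a, (h₁ x).trans hη, (h₂ x).trans hη⟩

end Uniqueness

section Restrict

variable {G H1 H2 : Graph'} {p : H1.V → H2.V} {hp : IsGraphHom H1 H2 p} {η' : MultiHom G H1}
  {y : MultiHom G H2}

lemma image_inter_preimage_eq (hy : y.le (pushforward p hp η')) (x : G.V) :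
    p '' (η'.toFun x ∩ p ⁻¹' y.toFun x) = y.toFun x := by
  rw [Set.image_inter_preimage]
  exact Set.inter_eq_right.2 (hy x)

variable (hp η') in
def MultiHom.restrict (hy : y.le (pushforward p hp η')) : MultiHom G H1 where
  toFun x := η'.toFun x ∩ p ⁻¹' y.toFun x
  nonempty x := by
    have hx := y.nonempty x
    rw [← image_inter_preimage_eq hy x] at hx
    exact hx.of_image
  edge hxx' _ hb _ hb' := η'.edge hxx' _ hb.1 _ hb'.1

lemma MultiHom.restrict_le (hy : y.le (pushforward p hp η')) : (η'.restrict hp hy).le η' :=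
  fun _ _ hb => hb.1

lemma pushforward_restrict (hy : y.le (pushforward p hp η')) :
    pushforward p hp (η'.restrict hp hy) = y :=
  MultiHom.ext (image_inter_preimage_eq hy)

end Restrict

section Lift

def liftSet {G H1 H2 : Graph'} (p : H1.V → H2.V) (η : MultiHom G H1) (y' : MultiHom G H2)
    (x : G.V) : Set H1.V :=
  {b | p b ∈ y'.toFun x ∧ ∀ z, G.E x z → ∀ a ∈ η.toFun z, H1.E a b}

variable {G H1 H2 : Graph'} {p : H1.V → H2.V} (hp : Is2CoveringMap H1 H2 p) {η : MultiHom G H1}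
  {y' : MultiHom G H2} (hy' : (pushforward p hp.1 η).le y')
include hp hy'

lemma exists_mem_liftSet_map_eq {x z : G.V} (hxz : G.E x z) {c' : H2.V} (hc' : c' ∈ y'.toFun x) :
    ∃ b ∈ liftSet p η y' x, p b = c' := by
  obtain ⟨a, ha⟩ := η.nonempty z
  obtain ⟨c, hc⟩ := η.nonempty x
  have hpa : p a ∈ y'.toFun z := hy' z ⟨a, ha, rfl⟩
  obtain ⟨b, hab, rfl⟩ := (hp.2 a).1.surjOn (H2.symm (y'.edge hxz _ hc' _ hpa))
  refine ⟨b, ⟨hc', fun z' hxz' a' ha' => ?_⟩, rfl⟩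
  exact hp.adj_of_adj_map (η.edge hxz c hc a ha) (η.edge hxz' c hc a' ha') hab
    (H2.symm (y'.edge hxz' _ hc' _ (hy' z' ⟨a', ha', rfl⟩)))

omit hy' in
lemma adj_of_mem_liftSet {x x' : G.V} (hxx' : G.E x x') {b b' : H1.V}
    (hb : b ∈ liftSet p η y' x) (hb' : b' ∈ liftSet p η y' x') : H1.E b b' := by
  obtain ⟨c, hc⟩ := η.nonempty x
  obtain ⟨c', hc'⟩ := η.nonempty x'
  exact hp.adj_of_adj_map (η.edge (G.symm hxx') c' hc' c hc) (hb.2 x' hxx' c' hc')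
    (hb'.2 x (G.symm hxx') c hc) (y'.edge hxx' _ hb.1 _ hb'.1)

variable (hG : ∀ x : G.V, ∃ y, G.E x y)
include hG

lemma image_liftSet (x : G.V) : p '' liftSet p η y' x = y'.toFun x := by
  refine Set.Subset.antisymm (Set.image_subset_iff.2 fun _ hb => hb.1) fun c' hc' => ?_
  obtain ⟨z, hxz⟩ := hG x
  exact exists_mem_liftSet_map_eq hp hy' hxz hc'

def MultiHom.lift : MultiHom G H1 where
  toFun := liftSet p η y'
  nonempty x := by
    have hc' := y'.nonempty x
    rw [← image_liftSet hp hy' hG x] at hc'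
    exact hc'.of_image
  edge hxx' _ hb _ hb' := adj_of_mem_liftSet hp hxx' hb hb'

lemma MultiHom.le_lift : η.le (MultiHom.lift hp hy' hG) :=
  fun x c hc => ⟨hy' x ⟨c, hc, rfl⟩, fun _ hxz _ ha => H1.symm (η.edge hxz c hc _ ha)⟩

lemma pushforward_lift : pushforward p hp.1 (MultiHom.lift hp hy' hG) = y' :=
  MultiHom.ext (image_liftSet hp hy' hG)

end Lift

theorem statement_3 (G H1 H2 : Graph') (hG : ∀ x : G.V, ∃ y, G.E x y)
    (p : H1.V → H2.V) (hp : Is2CoveringMap H1 H2 p) :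
    (∀ η η' : MultiHom G H1, MultiHom.le η η' →
      MultiHom.le (pushforward p hp.1 η) (pushforward p hp.1 η')) ∧
    ∀ y y' : MultiHom G H2, MultiHom.le y y' →
      (∀ x : MultiHom G H1, pushforward p hp.1 x = y →
        ∃! x' : MultiHom G H1, MultiHom.le x x' ∧ pushforward p hp.1 x' = y') ∧
      (∀ x' : MultiHom G H1, pushforward p hp.1 x' = y' →
        ∃! x : MultiHom G H1, MultiHom.le x x' ∧ pushforward p hp.1 x = y) := by
  have hinj : ∀ v, Set.InjOn p (nbhd H1 v) := fun v => (hp.2 v).1.injOn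
  refine ⟨fun η η' => pushforward_mono hp.1, fun y y' hyy' => ⟨?_, ?_⟩⟩
  · rintro η rfl
    refine ⟨MultiHom.lift hp hyy' hG, ⟨η.le_lift hp hyy' hG, pushforward_lift hp hyy' hG⟩, ?_⟩
    rintro ξ ⟨hle, hξ⟩
    refine eq_of_pushforward_eq_of_lower_bound hp.1 hinj hG hle (η.le_lift hp hyy' hG) ?_
    rw [hξ, pushforward_lift]
  · rintro η' rfl
    refine ⟨η'.restrict hp.1 hyy', ⟨MultiHom.restrict_le hyy', pushforward_restrict hyy'⟩, ?_⟩
    rintro ξ ⟨hle, hξ⟩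
    refine eq_of_pushforward_eq_of_upper_bound hp.1 hinj hG hle (MultiHom.restrict_le hyy') ?_
    rw [hξ, pushforward_restrict]
end

section
/- Let G and H be finite connected graphs, each with at least one edge, with H square-free, let f : G → H be a graph homomorphism, v ∈ V(G) a non-isolated vertex, w = f(v), and let K be the image of f_* : π₁²(G,v) → π₁²(H,w). If K is an infinite cyclic group (isomorphic to ℤ), then Π(f,v) is either the trivial group or an infinite cyclic group. -/
/-!
In a square-free graph `H`, two walks are `≃₂`-equivalent exactly when their edge words agree in
the free group on the oriented edges of `H`: a move (A) inserts a cancelling pair of letters, and a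
move (B) replaces a path `a - b - c` by a path `a - d - c`, which has the same word because `H` has
no 4-cycles (either `b = d` or `a = c`). So `π₁²(H, w)` embeds in a free group.

A ×-homotopy `h` from `f` to `f` and an edge `v v'` trace a ladder in `H`; its word is the class of
the realized walk. Sliding a closed walk `γ` through the ladder one rung at a time, by the same
two-step exchange, shows that the ladder word commutes with the word of `f ∘ γ`. Stacking and
reversing homotopies shows that realizable words form a subgroup, so `Π(f, v)` lies in the
centralizer of a nontrivial element `g` that generates `K`. In a free group that centralizer is
free (Nielsen–Schreier) and has `g` in its centre, so it is cyclic. Free groups are torsion-free,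
so `Π(f, v)` is trivial or infinite cyclic.
-/

namespace FreeGroup

variable {ι : Type*}

theorem mem_zpowers_of_commute_of [DecidableEq ι] {c : ι} (z : FreeGroup ι)
    (hz : Commute z (of c)) : z ∈ Subgroup.zpowers (of c) := by
  match hw : z.toWord with
  | [] => rw [toWord_eq_nil_iff.mp hw]; exact one_mem _
  | (d, b) :: rest =>
    have hsplit : z = mk [(d, b)] * mk rest := by
      rw [mul_mk, List.singleton_append, ← hw, mk_toWord]
    by_cases hdc : d = c
    · subst hdc
      have hhead : mk [(d, b)] ∈ Subgroup.zpowers (of d) := by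
        cases b
        · exact inv_mem (Subgroup.mem_zpowers (of d))
        · exact Subgroup.mem_zpowers (of d)
      obtain ⟨k, hk⟩ := Subgroup.mem_zpowers_iff.mp hhead
      have hrest : Commute (mk rest) (of d) := by
        rw [show mk rest = (mk [(d, b)])⁻¹ * z by rw [hsplit, inv_mul_cancel_left], ← hk]
        exact ((Commute.refl _).zpow_left k).inv_left.mul_left hz
      have hdecr : (mk rest).norm < z.norm := by
        have hlen : z.norm = rest.length + 1 := by simp [norm, hw]
        have := norm_mk_le (L₁ := rest)
        omega
      rw [hsplit]
      exact mul_mem hhead (mem_zpowers_of_commute_of (mk rest) hrest)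
    · -- `of c * z = z * of c` has the word `(c, true) :: z.toWord` of full length, so it is also
      -- `z.toWord ++ [(c, true)]`, and the first letters give `c = d`
      exfalso
      have hleft : (of c * z).toWord = (c, true) :: z.toWord := by
        rw [toWord_mul, toWord_of, List.singleton_append, reduce.cons, reduce_toWord, hw]
        simp [Ne.symm hdc]
      have hright : (z * of c).toWord = z.toWord ++ [(c, true)] := by
        refine (toWord_of c ▸ toWord_mul_sublist z (of c)).eq_of_length ?_
        rw [hz.eq, hleft]
        simp
      have := hleft.symm.trans (hz.eq ▸ hright)
      rw [hw] at this
      exact hdc (congrArg (·.1) (List.cons.inj this).1).symm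
termination_by z.norm

theorem subsingleton_of_mem_center {z : FreeGroup ι} (hz : z ≠ 1)
    (hcen : z ∈ Subgroup.center (FreeGroup ι)) : Subsingleton ι := by
  classical
  refine ⟨fun a b => by_contra fun hab => hz ?_⟩
  obtain ⟨s, rfl⟩ := Subgroup.mem_zpowers_iff.mp <|
    mem_zpowers_of_commute_of _ (Subgroup.mem_center_iff.mp hcen (of a)).symm
  obtain ⟨t, ht⟩ := Subgroup.mem_zpowers_iff.mp <|
    mem_zpowers_of_commute_of _ (Subgroup.mem_center_iff.mp hcen (of b)).symm
  let count : FreeGroup ι →* Multiplicative ℤ :=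
    FreeGroup.lift fun x => Multiplicative.ofAdd (if x = a then 1 else 0)
  have hs := congrArg count ht
  simp only [count, map_zpow, lift_apply_of, if_pos, if_neg (Ne.symm hab), ← ofAdd_zsmul]
    at hs
  rw [smul_zero, smul_eq_mul, mul_one, ofAdd_zero, eq_comm, ofAdd_eq_one] at hs
  rw [hs, zpow_zero]

instance isCyclic_of_subsingleton [Subsingleton ι] : IsCyclic (FreeGroup ι) := by
  rw [isCyclic_iff_exists_zpowers_eq_top]
  rcases isEmpty_or_nonempty ι with hι | ⟨⟨a⟩⟩
  · refine ⟨1, ?_⟩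
    rw [← closure_range_of, Set.range_eq_empty, Subgroup.closure_empty,
      Subgroup.zpowers_one_eq_bot]
  · have : Unique ι := uniqueOfSubsingleton a
    refine ⟨of default, ?_⟩
    rw [← closure_range_of, Set.range_unique, Subgroup.zpowers_eq_closure]

end FreeGroup

theorem IsFreeGroup.isCyclic_of_mem_center {G : Type*} [Group G] [IsFreeGroup G] {z : G}
    (hz : z ≠ 1) (hcen : z ∈ Subgroup.center G) : IsCyclic G := by
  let e := IsFreeGroup.toFreeGroup G
  have : Subsingleton (IsFreeGroup.Generators G) := by
    refine FreeGroup.subsingleton_of_mem_center (z := e z) (by simpa using hz) ?_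
    rw [Subgroup.mem_center_iff] at hcen ⊢
    intro y
    obtain ⟨x, rfl⟩ := e.surjective y
    simp only [← map_mul, hcen x]
  exact isCyclic_of_surjective e.symm e.symm.surjective

theorem IsFreeGroup.isCyclic_centralizer_singleton {G : Type*} [Group G] [IsFreeGroup G] {g : G}
    (hg : g ≠ 1) : IsCyclic (Subgroup.centralizer {g}) := by
  let g' : Subgroup.centralizer {g} := ⟨g, Subgroup.mem_centralizer_singleton_iff.mpr rfl⟩
  refine IsFreeGroup.isCyclic_of_mem_center (z := g') (by simpa [g'] using hg) ?_
  rw [Subgroup.mem_center_iff]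
  rintro ⟨y, hy⟩
  exact Subtype.ext (Subgroup.mem_centralizer_singleton_iff.mp hy)

section PathWord

variable {V : Type*} [LinearOrder V]

def edgeLetter (a b : V) : (V × V) × Bool :=
  if a < b then ((a, b), true) else ((b, a), false)

theorem edgeLetter_swap {a b : V} (h : a ≠ b) :
    edgeLetter b a = ((edgeLetter a b).1, !(edgeLetter a b).2) := by
  unfold edgeLetter
  rcases h.lt_or_gt with h | h
  · simp [h, h.not_gt]
  · simp [h, h.not_gt]

theorem edgeLetter_injective (a : V) : Function.Injective (edgeLetter a) := by
  intro b c h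
  unfold edgeLetter at h
  split_ifs at h <;> simp_all [Prod.ext_iff]

def edgeLetters (p : ℕ → V) (n : ℕ) : List ((V × V) × Bool) :=
  (List.range n).map fun i => edgeLetter (p i) (p (i + 1))

@[simp]
theorem length_edgeLetters (p : ℕ → V) (n : ℕ) : (edgeLetters p n).length = n := by
  simp [edgeLetters]

theorem getElem_edgeLetters (p : ℕ → V) (n i : ℕ) (hi : i < (edgeLetters p n).length) :
    (edgeLetters p n)[i] = edgeLetter (p i) (p (i + 1)) := by
  simp [edgeLetters]

theorem edgeLetters_congr {p q : ℕ → V} {n : ℕ} (h : ∀ i ≤ n, p i = q i) :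
    edgeLetters p n = edgeLetters q n :=
  List.map_congr_left fun i hi => by
    rw [List.mem_range] at hi
    rw [h i hi.le, h (i + 1) hi]

theorem edgeLetters_add (p : ℕ → V) (m n : ℕ) :
    edgeLetters p (m + n) = edgeLetters p m ++ edgeLetters (fun i => p (m + i)) n := by
  simp only [edgeLetters, List.range_add, List.map_append, List.map_map]
  rfl

theorem edgeLetters_eq_append_cons_cons (p : ℕ → V) {k n : ℕ} (hk : k + 2 ≤ n) :
    edgeLetters p n = edgeLetters p k ++ edgeLetter (p k) (p (k + 1)) ::
      edgeLetter (p (k + 1)) (p (k + 2)) :: edgeLetters (fun i => p (k + 2 + i)) (n - k - 2) := by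
  obtain ⟨m, rfl⟩ := Nat.exists_eq_add_of_le hk
  rw [show k + 2 + m - k - 2 = m by omega, edgeLetters_add, edgeLetters_add, List.append_assoc]
  rfl

def edgeWord (a b : V) : FreeGroup (V × V) :=
  FreeGroup.mk [edgeLetter a b]

theorem edgeWord_swap {a b : V} (h : a ≠ b) : edgeWord b a = (edgeWord a b)⁻¹ := by
  rw [edgeWord, edgeWord, FreeGroup.inv_mk, edgeLetter_swap h]
  rfl

def pathWord (p : ℕ → V) (n : ℕ) : FreeGroup (V × V) :=
  FreeGroup.mk (edgeLetters p n)

@[simp]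
theorem pathWord_zero (p : ℕ → V) : pathWord p 0 = 1 := rfl

theorem pathWord_add (p : ℕ → V) (m n : ℕ) :
    pathWord p (m + n) = pathWord p m * pathWord (fun i => p (m + i)) n := by
  rw [pathWord, pathWord, pathWord, FreeGroup.mul_mk, edgeLetters_add]

theorem pathWord_succ (p : ℕ → V) (n : ℕ) :
    pathWord p (n + 1) = pathWord p n * edgeWord (p n) (p (n + 1)) :=
  pathWord_add p n 1

theorem pathWord_congr {p q : ℕ → V} {n : ℕ} (h : ∀ i ≤ n, p i = q i) :
    pathWord p n = pathWord q n :=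
  congrArg FreeGroup.mk (edgeLetters_congr h)

theorem pathWord_eq_mul_edgeWord_mul (p : ℕ → V) {k n : ℕ} (hk : k + 2 ≤ n) :
    pathWord p n = pathWord p k * (edgeWord (p k) (p (k + 1)) *
      edgeWord (p (k + 1)) (p (k + 2))) * pathWord (fun i => p (k + 2 + i)) (n - k - 2) := by
  simp [pathWord, edgeWord, FreeGroup.mul_mk, edgeLetters_eq_append_cons_cons p hk]

theorem pathWord_reverse {p : ℕ → V} {n : ℕ} (hp : ∀ i < n, p i ≠ p (i + 1)) :
    pathWord (fun i => p (n - i)) n = (pathWord p n)⁻¹ := by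
  induction n with
  | zero => simp
  | succ n ih =>
    rw [add_comm n 1, pathWord_add, pathWord_succ, pathWord_zero, one_mul, add_comm 1 n,
      pathWord_succ, mul_inv_rev, ← ih fun i hi => hp i (by omega),
      ← edgeWord_swap (hp n n.lt_succ_self)]
    congr 1
    exact pathWord_congr fun i _ => congrArg p (by omega)

end PathWord

def Graph'.IsWalk (G : Graph') (p : ℕ → G.V) (n : ℕ) : Prop :=
  ∀ i < n, G.E (p i) (p (i + 1))

theorem Graph'.IsWalk.ne {G : Graph'} (hirr : ∀ x, ¬ G.E x x) {p : ℕ → G.V} {n : ℕ}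
    (hp : G.IsWalk p n) : ∀ i < n, p i ≠ p (i + 1) :=
  fun i hi he => hirr _ (he ▸ hp i hi)

namespace SquareFree

variable {H : Graph'} (hH : SquareFree H)
include hH

theorem ne_of_adj {a b : H.V} (h : H.E a b) : a ≠ b :=
  fun hab => hH.1 b (hab ▸ h)

variable [LinearOrder H.V]

theorem edgeWord_mul_edgeWord_eq {a b c d : H.V} (hab : H.E a b) (hbc : H.E b c)
    (had : H.E a d) (hdc : H.E d c) :
    edgeWord a b * edgeWord b c = edgeWord a d * edgeWord d c := by
  by_cases hbd : b = d
  · rw [hbd]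
  by_cases hac : a = c
  · subst hac
    rw [edgeWord_swap (hH.ne_of_adj hab), edgeWord_swap (hH.ne_of_adj had), mul_inv_cancel,
      mul_inv_cancel]
  · exact (hH.2 ⟨a, b, c, d, hH.ne_of_adj hab, hac, hH.ne_of_adj had, hH.ne_of_adj hbc, hbd,
      (hH.ne_of_adj hdc).symm, hab, hbc, H.symm hdc, H.symm had⟩).elim

theorem pathWord_eq_of_forall_ne_eq {p q : ℕ → H.V} {n j : ℕ} (hp : H.IsWalk p n)
    (hq : H.IsWalk q n) (h0 : p 0 = q 0) (hn : p n = q n) (h : ∀ i ≤ n, i ≠ j → p i = q i) :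
    pathWord p n = pathWord q n := by
  by_cases hpq : ∀ i ≤ n, p i = q i
  · exact pathWord_congr hpq
  push Not at hpq
  obtain ⟨i, hin, hi⟩ := hpq
  obtain rfl : i = j := by_contra fun hij => hi (h i hin hij)
  obtain ⟨k, rfl⟩ : ∃ k, i = k + 1 := Nat.exists_eq_succ_of_ne_zero fun h => hi (h ▸ h0)
  have hkn : k + 2 ≤ n := by
    by_contra
    exact hi (by rw [show k + 1 = n by omega]; exact hn)
  have hpre : pathWord p k = pathWord q k := pathWord_congr fun t ht => h t (by omega) (by omega)
  have hpost : pathWord (fun t => p (k + 2 + t)) (n - k - 2) =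
      pathWord (fun t => q (k + 2 + t)) (n - k - 2) :=
    pathWord_congr fun t ht => h _ (by omega) (by omega)
  have hmid : edgeWord (p k) (p (k + 1)) * edgeWord (p (k + 1)) (p (k + 2)) =
      edgeWord (q k) (q (k + 1)) * edgeWord (q (k + 1)) (q (k + 2)) := by
    rw [← h k (by omega) (by omega), ← h (k + 2) hkn (by omega)]
    refine hH.edgeWord_mul_edgeWord_eq (hp k (by omega)) (hp (k + 1) (by omega)) ?_ ?_
    · rw [h k (by omega) (by omega)]
      exact hq k (by omega)
    · rw [h (k + 2) hkn (by omega)]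
      exact hq (k + 1) (by omega)
  rw [pathWord_eq_mul_edgeWord_mul p hkn, pathWord_eq_mul_edgeWord_mul q hkn, hpre, hmid, hpost]

end SquareFree

theorem eqv2_equivalence {G : Graph'} {a b : G.V} : Equivalence (@Eqv2 G a b) :=
  Relation.EqvGen.is_equivalence _

namespace Walk

variable {G : Graph'} {a b c : G.V}

theorem isWalk (γ : Walk G a b) : G.IsWalk γ.toFun γ.len := γ.adj

theorem eqv2_of_forall_eq {γ δ : Walk G a b} (hlen : γ.len = δ.len)
    (h : ∀ i ≤ γ.len, γ.toFun i = δ.toFun i) : Eqv2 γ δ :=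
  Relation.EqvGen.rel _ _ (Or.inr ⟨hlen, γ.len + 1, fun i hi _ => h i hi⟩)

def eraseBacktrack (γ : Walk G a b) (k : ℕ) (hk : k + 2 ≤ γ.len)
    (hback : γ.toFun (k + 2) = γ.toFun k) : Walk G a b where
  len := γ.len - 2
  toFun i := if i ≤ k then γ.toFun i else γ.toFun (i + 2)
  start_eq := by simp [γ.start_eq]
  end_eq := by
    split_ifs with h
    · rw [show γ.len - 2 = k by omega, ← hback, show k + 2 = γ.len by omega, γ.end_eq]
    · rw [Nat.sub_add_cancel (by omega), γ.end_eq]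
  adj i hi := by
    split_ifs with h1 h2 h2
    · exact γ.adj i (by omega)
    · obtain rfl : i = k := by omega
      rw [← hback]
      exact γ.adj (i + 2) (by omega)
    · omega
    · exact γ.adj (i + 2) (by omega)

theorem moveA_eraseBacktrack (γ : Walk G a b) (k : ℕ) (hk : k + 2 ≤ γ.len)
    (hback : γ.toFun (k + 2) = γ.toFun k) : MoveA (γ.eraseBacktrack k hk hback) γ := by
  refine ⟨by simp only [eraseBacktrack]; omega, k, by simp only [eraseBacktrack]; omega,
    fun i hi => (if_pos hi).symm, fun i hki _ => ?_⟩
  simp only [eraseBacktrack]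
  split_ifs with h
  · rw [show i = k by omega, hback]
  · rfl

variable [LinearOrder G.V]

theorem edgeLetters_eraseBacktrack (γ : Walk G a b) (k : ℕ) (hk : k + 2 ≤ γ.len)
    (hback : γ.toFun (k + 2) = γ.toFun k) :
    edgeLetters (γ.eraseBacktrack k hk hback).toFun (γ.eraseBacktrack k hk hback).len =
      edgeLetters γ.toFun k ++ edgeLetters (fun i => γ.toFun (k + 2 + i)) (γ.len - k - 2) := by
  simp only [eraseBacktrack]
  rw [show γ.len - 2 = k + (γ.len - k - 2) by omega, edgeLetters_add]
  congr 1
  · exact edgeLetters_congr fun i hi => if_pos hi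
  · refine edgeLetters_congr fun i _ => ?_
    split_ifs with h
    · rw [show i = 0 by omega, add_zero, add_zero, hback]
    · congr 1
      omega

theorem exists_moveA_of_edgeLetters_eq (hirr : ∀ x, ¬ G.E x x) (γ : Walk G a b)
    {L₁ L₂ : List ((G.V × G.V) × Bool)} {x : G.V × G.V} {s : Bool}
    (h : edgeLetters γ.toFun γ.len = L₁ ++ (x, s) :: (x, !s) :: L₂) :
    ∃ δ : Walk G a b, MoveA δ γ ∧ edgeLetters δ.toFun δ.len = L₁ ++ L₂ := by
  have hk : L₁.length + 2 ≤ γ.len := by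
    have := congrArg List.length h
    simp only [length_edgeLetters, List.length_append, List.length_cons] at this
    omega
  rw [edgeLetters_eq_append_cons_cons _ hk] at h
  obtain ⟨hL₁, hrest⟩ := List.append_inj h (by simp)
  simp only [List.cons.injEq] at hrest
  obtain ⟨h₁, h₂, hL₂⟩ := hrest
  have hback : γ.toFun (L₁.length + 2) = γ.toFun L₁.length := by
    refine edgeLetter_injective (γ.toFun (L₁.length + 1)) ?_
    rw [h₂, edgeLetter_swap (γ.isWalk.ne hirr _ (by omega)), h₁]
  refine ⟨γ.eraseBacktrack _ hk hback, γ.moveA_eraseBacktrack _ hk hback, ?_⟩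
  rw [edgeLetters_eraseBacktrack, hL₁, hL₂]

theorem exists_eqv2_of_red (hirr : ∀ x, ¬ G.E x x) (γ : Walk G a b)
    {L : List ((G.V × G.V) × Bool)} (h : FreeGroup.Red (edgeLetters γ.toFun γ.len) L) :
    ∃ δ : Walk G a b, Eqv2 γ δ ∧ edgeLetters δ.toFun δ.len = L := by
  induction h with
  | refl => exact ⟨γ, eqv2_equivalence.refl γ, rfl⟩
  | tail _ hstep ih =>
    obtain ⟨δ, hγδ, hδ⟩ := ih
    cases hstep
    obtain ⟨δ', hδ'δ, hδ'⟩ := exists_moveA_of_edgeLetters_eq hirr δ hδ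
    exact ⟨δ', eqv2_equivalence.trans hγδ (eqv2_equivalence.symm
      (Relation.EqvGen.rel _ _ (Or.inl hδ'δ))), hδ'⟩

theorem eqv2_of_edgeLetters_eq {γ δ : Walk G a b}
    (h : edgeLetters γ.toFun γ.len = edgeLetters δ.toFun δ.len) : Eqv2 γ δ := by
  have hlen : γ.len = δ.len := by simpa using congrArg List.length h
  refine eqv2_of_forall_eq hlen fun i hi => ?_
  induction i with
  | zero => rw [γ.start_eq, δ.start_eq]
  | succ i ih =>
    have e := List.getElem_of_eq h (i := i) (by simp; omega)
    rw [getElem_edgeLetters, getElem_edgeLetters, ih (by omega)] at e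
    exact edgeLetter_injective _ e

def word (γ : Walk G a b) : FreeGroup (G.V × G.V) :=
  pathWord γ.toFun γ.len

theorem eqv2_of_word_eq (hirr : ∀ x, ¬ G.E x x) {γ δ : Walk G a b} (h : γ.word = δ.word) :
    Eqv2 γ δ := by
  obtain ⟨L, hγ, hδ⟩ := FreeGroup.Red.exact.mp h
  obtain ⟨γ', hγγ', hγ'⟩ := exists_eqv2_of_red hirr γ hγ
  obtain ⟨δ', hδδ', hδ'⟩ := exists_eqv2_of_red hirr δ hδ
  exact eqv2_equivalence.trans hγγ' (eqv2_equivalence.trans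
    (eqv2_of_edgeLetters_eq (hγ'.trans hδ'.symm)) (eqv2_equivalence.symm hδδ'))

theorem word_eq_of_moveA (hirr : ∀ x, ¬ G.E x x) {γ δ : Walk G a b} (h : MoveA γ δ) :
    γ.word = δ.word := by
  obtain ⟨hlen, k, hk, hpre, hpost⟩ := h
  have hback : δ.toFun (k + 2) = δ.toFun k := (hpost k le_rfl hk).trans (hpre k le_rfl).symm
  rw [word, word, pathWord_eq_mul_edgeWord_mul δ.toFun (k := k) (by omega), hback,
    edgeWord_swap (δ.isWalk.ne hirr k (by omega)), mul_inv_cancel, mul_one,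
    ← Nat.add_sub_cancel' hk, pathWord_add]
  congr 1
  · exact pathWord_congr fun i hi => (hpre i hi).symm
  · rw [show δ.len - k - 2 = γ.len - k by omega]
    exact pathWord_congr fun i hi => by
      rw [show k + 2 + i = k + i + 2 by omega, hpost (k + i) (by omega) (by omega)]

theorem word_concat (γ : Walk G a b) (δ : Walk G b c) :
    (γ.concat δ).word = γ.word * δ.word := by
  rw [word, show (γ.concat δ).len = γ.len + δ.len from rfl, pathWord_add]
  congr 1
  · exact pathWord_congr fun i hi => if_pos hi
  · refine pathWord_congr fun i _ => ?_
    show (if γ.len + i ≤ γ.len then _ else _) = _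
    split_ifs with h
    · rw [show i = 0 by omega, add_zero, γ.end_eq, δ.start_eq]
    · rw [Nat.add_sub_cancel_left]

theorem word_reverse (hirr : ∀ x, ¬ G.E x x) (γ : Walk G a b) :
    γ.reverse.word = γ.word⁻¹ :=
  pathWord_reverse (γ.isWalk.ne hirr)

@[simp]
theorem word_constWalk (a : G.V) : (constWalk a).word = 1 := rfl

theorem word_pow {a : G.V} (γ : Walk G a a) (n : ℕ) : (γ.pow n).word = γ.word ^ n := by
  induction n with
  | zero => rfl
  | succ n ih => rw [Walk.pow, word_concat, ih, pow_succ]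

theorem word_zpow (hirr : ∀ x, ¬ G.E x x) {a : G.V} (γ : Walk G a a) (k : ℤ) :
    (γ.zpow k).word = γ.word ^ k := by
  cases k with
  | ofNat n => exact (word_pow γ n).trans (zpow_natCast _ n).symm
  | negSucc n => rw [Walk.zpow, word_pow, word_reverse hirr, zpow_negSucc, inv_pow]

end Walk

namespace SquareFree

variable {H : Graph'} (hH : SquareFree H) [LinearOrder H.V]
include hH

theorem word_eq_of_moveB {a b : H.V} {γ δ : Walk H a b} (h : MoveB γ δ) :
    γ.word = δ.word := by
  obtain ⟨hlen, j, hj⟩ := h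
  rw [Walk.word, Walk.word, ← hlen]
  refine hH.pathWord_eq_of_forall_ne_eq γ.isWalk (hlen ▸ δ.isWalk)
    (γ.start_eq.trans δ.start_eq.symm) ?_ hj
  rw [γ.end_eq, hlen, δ.end_eq]

theorem eqv2_iff_word_eq {a b : H.V} {γ δ : Walk H a b} : Eqv2 γ δ ↔ γ.word = δ.word := by
  refine ⟨fun h => ?_, Walk.eqv2_of_word_eq hH.1⟩
  induction h with
  | rel _ _ h => exact h.elim (Walk.word_eq_of_moveA hH.1) hH.word_eq_of_moveB
  | refl => rfl
  | symm _ _ _ ih => exact ih.symm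
  | trans _ _ _ _ _ ih₁ ih₂ => exact ih₁.trans ih₂

end SquareFree

/-- A homomorphism `G × I_∞ → H`, written as a family indexed by time. -/
def IsStripHom (G H : Graph') (u : G.V → ℕ → H.V) : Prop :=
  ∀ {x y : G.V} {s t : ℕ}, G.E x y → s ≤ t + 1 → t ≤ s + 1 → H.E (u x s) (u y t)

namespace IsStripHom

variable {G H : Graph'} {u u₁ u₂ : G.V → ℕ → H.V}

theorem adj (hu : IsStripHom G H u) {x y : G.V} (hxy : G.E x y) (t : ℕ) : H.E (u x t) (u y t) :=
  hu hxy (by omega) (by omega)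

theorem adj_succ (hu : IsStripHom G H u) {x y : G.V} (hxy : G.E x y) (t : ℕ) :
    H.E (u x t) (u y (t + 1)) :=
  hu hxy (by omega) (by omega)

theorem succ_adj (hu : IsStripHom G H u) {x y : G.V} (hxy : G.E x y) (t : ℕ) :
    H.E (u x (t + 1)) (u y t) :=
  hu hxy (by omega) (by omega)

theorem of_isGraphHom {n : ℕ} {h : (prodI G n).V → H.V} (hh : IsGraphHom (prodI G n) H h) :
    IsStripHom G H fun x t => h (x, finClip n t) := fun hxy hst hts =>
  hh ⟨hxy, by simp only [finClip]; omega, by simp only [finClip]; omega⟩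

theorem isGraphHom (hu : IsStripHom G H u) (n : ℕ) :
    IsGraphHom (prodI G n) H fun p => u p.1 p.2 := fun ⟨hxy, hst, hts⟩ => hu hxy hst hts

theorem const {f : G.V → H.V} (hf : IsGraphHom G H f) : IsStripHom G H fun x _ => f x :=
  fun hxy _ _ => hf hxy

theorem stack (hu₁ : IsStripHom G H u₁) (hu₂ : IsStripHom G H u₂) {n : ℕ}
    (h : ∀ x, u₁ x n = u₂ x 0) :
    IsStripHom G H fun x t => if t ≤ n then u₁ x t else u₂ x (t - n) := by
  intro x y s t hxy hst hts
  dsimp only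
  split_ifs with hs ht ht
  · exact hu₁ hxy hst hts
  · rw [show s = n by omega, h, show t - n = 1 by omega]
    exact hu₂ hxy (by omega) (by omega)
  · rw [show t = n by omega, h, show s - n = 1 by omega]
    exact hu₂ hxy (by omega) (by omega)
  · exact hu₂ hxy (by omega) (by omega)

theorem reverse (hu : IsStripHom G H u) (n : ℕ) : IsStripHom G H fun x t => u x (n - t) :=
  fun hxy _ _ => hu hxy (by omega) (by omega)

end IsStripHom

section Ladder

variable {G H : Graph'} [LinearOrder H.V]

def rungWord (u : G.V → ℕ → H.V) (x x' : G.V) (t : ℕ) : FreeGroup (H.V × H.V) :=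
  edgeWord (u x t) (u x' t) * edgeWord (u x' t) (u x (t + 1))

/-- The word of the walk `(u x 0, u x' 0, u x 1, u x' 1, …, u x n)`. -/
def ladderWord (u : G.V → ℕ → H.V) (x x' : G.V) (n : ℕ) : FreeGroup (H.V × H.V) :=
  ((List.range n).map (rungWord u x x')).prod

@[simp]
theorem ladderWord_zero (u : G.V → ℕ → H.V) (x x' : G.V) : ladderWord u x x' 0 = 1 := rfl

theorem ladderWord_succ (u : G.V → ℕ → H.V) (x x' : G.V) (n : ℕ) :
    ladderWord u x x' (n + 1) = ladderWord u x x' n * rungWord u x x' n :=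
  List.prod_range_succ _ n

theorem ladderWord_succ' (u : G.V → ℕ → H.V) (x x' : G.V) (n : ℕ) :
    ladderWord u x x' (n + 1) = rungWord u x x' 0 * ladderWord (fun y t => u y (t + 1)) x x' n :=
  List.prod_range_succ' _ n

theorem ladderWord_congr {u u' : G.V → ℕ → H.V} {x x' : G.V} {n : ℕ}
    (h : ∀ y t, t ≤ n → u y t = u' y t) : ladderWord u x x' n = ladderWord u' x x' n := by
  refine congrArg List.prod (List.map_congr_left fun t ht => ?_)
  rw [List.mem_range] at ht
  simp only [rungWord, h _ t ht.le, h _ (t + 1) ht]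

theorem pathWord_zigzag (u : G.V → ℕ → H.V) (x x' : G.V) (n : ℕ) :
    pathWord (fun i => if i % 2 = 0 then u x (i / 2) else u x' (i / 2)) (2 * n) =
      ladderWord u x x' n := by
  induction n with
  | zero => rfl
  | succ n ih =>
    rw [show 2 * (n + 1) = 2 * n + 1 + 1 by ring, pathWord_succ, pathWord_succ, ih,
      ladderWord_succ, mul_assoc, rungWord, if_pos (by omega), if_neg (by omega),
      if_pos (by omega), show 2 * n / 2 = n by omega, show (2 * n + 1) / 2 = n by omega,
      show (2 * n + 1 + 1) / 2 = n + 1 by omega]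

theorem ladderWord_stack (u₁ u₂ : G.V → ℕ → H.V) (x x' : G.V) (n₁ n₂ : ℕ)
    (h : ∀ y, u₁ y n₁ = u₂ y 0) :
    ladderWord (fun y t => if t ≤ n₁ then u₁ y t else u₂ y (t - n₁)) x x' (n₁ + n₂) =
      ladderWord u₁ x x' n₁ * ladderWord u₂ x x' n₂ := by
  induction n₂ with
  | zero =>
    rw [add_zero, ladderWord_zero, mul_one]
    exact ladderWord_congr fun y t ht => if_pos ht
  | succ n ih =>
    rw [← add_assoc, ladderWord_succ, ih, ladderWord_succ, mul_assoc]
    congr 2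
    simp only [rungWord, if_neg (show ¬ n₁ + n + 1 ≤ n₁ by omega),
      show n₁ + n + 1 - n₁ = n + 1 by omega]
    split_ifs with hn
    · rw [show n = 0 by omega, add_zero, h, h]
    · rw [Nat.add_sub_cancel_left]

end Ladder

namespace SquareFree

variable {G H : Graph'} (hH : SquareFree H) [LinearOrder H.V] {u : G.V → ℕ → H.V}
include hH

theorem rungWord_eq (hu : IsStripHom G H u) {x x' x'' : G.V} (hx' : G.E x x') (hx'' : G.E x x'')
    (t : ℕ) : rungWord u x x' t = rungWord u x x'' t :=
  hH.edgeWord_mul_edgeWord_eq (hu.adj hx' t) (hu.adj_succ (G.symm hx') t) (hu.adj hx'' t)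
    (hu.adj_succ (G.symm hx'') t)

theorem ladderWord_eq (hu : IsStripHom G H u) {x x' x'' : G.V} (hx' : G.E x x')
    (hx'' : G.E x x'') (n : ℕ) : ladderWord u x x' n = ladderWord u x x'' n :=
  congrArg List.prod (List.map_congr_left fun t _ => hH.rungWord_eq hu hx' hx'' t)

theorem ladderWord_reverse (hu : IsStripHom G H u) {x x' : G.V} (hx' : G.E x x') (n : ℕ) :
    ladderWord (fun y t => u y (n - t)) x x' n = (ladderWord u x x' n)⁻¹ := by
  induction n generalizing u with
  | zero => simp
  | succ n ih =>
    have hrung : rungWord (fun y t => u y (n + 1 - t)) x x' 0 = (rungWord u x x' n)⁻¹ := by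
      simp only [rungWord, Nat.sub_zero, show n + 1 - (0 + 1) = n by omega, mul_inv_rev]
      rw [← edgeWord_swap (hH.ne_of_adj (hu.adj_succ (G.symm hx') n)),
        ← edgeWord_swap (hH.ne_of_adj (hu.adj hx' n))]
      exact hH.edgeWord_mul_edgeWord_eq (hu.adj hx' (n + 1)) (hu.succ_adj (G.symm hx') n)
        (hu.succ_adj hx' n) (hu.adj (G.symm hx') n)
    rw [ladderWord_succ', hrung, ladderWord_succ, mul_inv_rev, ← ih hu]
    congr 1
    exact ladderWord_congr fun y t ht => congrArg (u y) (by omega)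

theorem pathWord_mul_rungWord (hu : IsStripHom G H u) {p : ℕ → G.V} {m : ℕ}
    (hp : G.IsWalk p m) {a' b' : G.V} (ha' : G.E (p 0) a') (hb' : G.E (p m) b') (t : ℕ) :
    pathWord (fun j => u (p j) t) m * rungWord u (p m) b' t =
      rungWord u (p 0) a' t * pathWord (fun j => u (p j) (t + 1)) m := by
  induction m generalizing b' with
  | zero => simpa using hH.rungWord_eq hu hb' ha' t
  | succ m ih =>
    have hm : G.E (p m) (p (m + 1)) := hp m (by omega)
    -- the rung at `p (m + 1)` slides back across the edge `p m ~ p (m + 1)`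
    have hsquare : edgeWord (u (p m) t) (u (p (m + 1)) t) * rungWord u (p (m + 1)) b' t =
        rungWord u (p m) (p (m + 1)) t * edgeWord (u (p m) (t + 1)) (u (p (m + 1)) (t + 1)) := by
      rw [rungWord, rungWord, ← mul_assoc, mul_assoc _ (edgeWord _ (u (p m) (t + 1))),
        ← hH.edgeWord_mul_edgeWord_eq (hu.adj hb' t) (hu.adj_succ (G.symm hb') t)
          (hu.adj_succ (G.symm hm) t) (hu.adj hm (t + 1)), ← mul_assoc]
    rw [pathWord_succ, mul_assoc, hsquare, ← mul_assoc, ih (fun i hi => hp i (by omega)) hm,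
      mul_assoc, ← pathWord_succ]

theorem pathWord_mul_ladderWord (hu : IsStripHom G H u) {v v' : G.V} (hv' : G.E v v')
    (γ : Walk G v v) (n : ℕ) :
    pathWord (fun j => u (γ.toFun j) 0) γ.len * ladderWord u v v' n =
      ladderWord u v v' n * pathWord (fun j => u (γ.toFun j) n) γ.len := by
  induction n with
  | zero => simp
  | succ n ih =>
    have hslide := hH.pathWord_mul_rungWord hu γ.isWalk (γ.start_eq ▸ hv') (γ.end_eq ▸ hv') n
    rw [γ.start_eq, γ.end_eq] at hslide
    rw [ladderWord_succ, ← mul_assoc, ih, mul_assoc, hslide, mul_assoc]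

end SquareFree

section Realizable

variable {G H : Graph'} [LinearOrder H.V]

def realizableWords (f : G.V → H.V) (v : G.V) : Set (FreeGroup (H.V × H.V)) :=
  {x | ∃ ω : Walk H (f v) (f v), Realizable f v ω ∧ ω.word = x}

theorem word_realizedWalk {n : ℕ} (h : (prodI G n).V → H.V) (hh : IsGraphHom (prodI G n) H h)
    {v v' : G.V} (hvv' : G.E v v') {w : H.V} (h0 : h (v, finClip n 0) = w)
    (hN : h (v, finClip n n) = w) :
    (realizedWalk h hh hvv' h0 hN).word = ladderWord (fun x t => h (x, finClip n t)) v v' n :=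
  pathWord_zigzag (fun x t => h (x, finClip n t)) v v' n

namespace SquareFree

variable (hH : SquareFree H)
include hH

theorem mem_realizableWords_iff {f : G.V → H.V} {v v' : G.V} (hvv' : G.E v v')
    {x : FreeGroup (H.V × H.V)} :
    x ∈ realizableWords f v ↔ ∃ (n : ℕ) (u : G.V → ℕ → H.V), IsStripHom G H u ∧
      (∀ y, u y 0 = f y) ∧ (∀ y, u y n = f y) ∧ ladderWord u v v' n = x := by
  constructor
  · rintro ⟨ω, ⟨n, h, hh, hs, he, v'', hvv'', hω⟩, rfl⟩
    have hu : IsStripHom G H fun x t => h (x, finClip n t) := IsStripHom.of_isGraphHom hh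
    refine ⟨n, _, hu, hs, he, ?_⟩
    rw [hH.eqv2_iff_word_eq.mp hω, word_realizedWalk, hH.ladderWord_eq hu hvv'' hvv']
  · rintro ⟨n, u, hu, h0, hn, rfl⟩
    let h : (prodI G n).V → H.V := fun p => u p.1 p.2
    have hs : ∀ y, h (y, finClip n 0) = f y := fun y => by simp [h, finClip, h0]
    have he : ∀ y, h (y, finClip n n) = f y := fun y => by simp [h, finClip, hn]
    refine ⟨realizedWalk h (hu.isGraphHom n) hvv' (hs v) (he v),
      ⟨n, h, hu.isGraphHom n, hs, he, v', hvv', eqv2_equivalence.refl _⟩, ?_⟩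
    rw [word_realizedWalk]
    exact ladderWord_congr fun y t ht => by simp [h, finClip, ht]

def realizableSubgroup {f : G.V → H.V} (hf : IsGraphHom G H f) {v v' : G.V} (hvv' : G.E v v') :
    Subgroup (FreeGroup (H.V × H.V)) where
  carrier := realizableWords f v
  one_mem' := (hH.mem_realizableWords_iff hvv').mpr
    ⟨0, fun y _ => f y, IsStripHom.const hf, fun _ => rfl, fun _ => rfl, rfl⟩
  mul_mem' {x y} hx hy := by
    obtain ⟨n₁, u₁, hu₁, h0₁, hn₁, rfl⟩ := (hH.mem_realizableWords_iff hvv').mp hx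
    obtain ⟨n₂, u₂, hu₂, h0₂, hn₂, rfl⟩ := (hH.mem_realizableWords_iff hvv').mp hy
    have hglue : ∀ y, u₁ y n₁ = u₂ y 0 := fun y => (hn₁ y).trans (h0₂ y).symm
    refine (hH.mem_realizableWords_iff hvv').mpr ⟨n₁ + n₂, _, hu₁.stack hu₂ hglue,
      fun y => by simp [h0₁], fun y => ?_, ladderWord_stack u₁ u₂ v v' n₁ n₂ hglue⟩
    split_ifs with h
    · rw [show n₁ + n₂ = n₁ by omega, hn₁]
    · rw [Nat.add_sub_cancel_left, hn₂]
  inv_mem' {x} hx := by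
    obtain ⟨n, u, hu, h0, hn, rfl⟩ := (hH.mem_realizableWords_iff hvv').mp hx
    exact (hH.mem_realizableWords_iff hvv').mpr ⟨n, _, hu.reverse n, fun y => by simpa using hn y,
      fun y => by simpa using h0 y, hH.ladderWord_reverse hu hvv' n⟩

theorem realizableSubgroup_le_centralizer {f : G.V → H.V} (hf : IsGraphHom G H f) {v v' : G.V}
    (hvv' : G.E v v') (γ : Walk G v v) :
    hH.realizableSubgroup hf hvv' ≤ Subgroup.centralizer {(γ.map f hf).word} := by
  intro x hx
  obtain ⟨n, u, hu, h0, hn, rfl⟩ := (hH.mem_realizableWords_iff hvv').mp hx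
  have hslice : ∀ t, (∀ y, u y t = f y) →
      pathWord (fun j => u (γ.toFun j) t) γ.len = (γ.map f hf).word :=
    fun t ht => pathWord_congr fun j _ => ht _
  have hcomm := hH.pathWord_mul_ladderWord hu hvv' γ n
  rw [hslice 0 h0, hslice n hn] at hcomm
  exact Subgroup.mem_centralizer_singleton_iff.mpr hcomm.symm

end SquareFree

end Realizable

theorem statement_12_general (G H : Graph')
    (hHsf : SquareFree H)
    (f : G.V → H.V) (hf : IsGraphHom G H f)
    (v : G.V) (hv : ∃ v' : G.V, G.E v v')
    (hK : ∃ γ₀ : Walk G v v,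
      (∀ γ : Walk G v v, ∃ k : ℤ,
        Eqv2 (Walk.map f hf γ) (Walk.zpow (Walk.map f hf γ₀) k)) ∧
      (∀ k : ℤ, k ≠ 0 →
        ¬ Eqv2 (Walk.zpow (Walk.map f hf γ₀) k) (constWalk (f v)))) :
    (∀ ω : Walk H (f v) (f v), Realizable f v ω → Eqv2 ω (constWalk (f v))) ∨
    (∃ ω₀ : Walk H (f v) (f v), Realizable f v ω₀ ∧
      (∀ ω : Walk H (f v) (f v), Realizable f v ω →
        ∃ k : ℤ, Eqv2 ω (Walk.zpow ω₀ k)) ∧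
      (∀ k : ℤ, k ≠ 0 → ¬ Eqv2 (Walk.zpow ω₀ k) (constWalk (f v)))) := by
  let _ : LinearOrder H.V := IsWellOrder.linearOrder WellOrderingRel
  obtain ⟨v', hvv'⟩ := hv
  obtain ⟨γ₀, -, hγ₀⟩ := hK
  have hg : (γ₀.map f hf).word ≠ 1 := fun h => hγ₀ 1 one_ne_zero <|
    hHsf.eqv2_iff_word_eq.mpr (by rw [Walk.word_zpow hHsf.1, zpow_one, h, Walk.word_constWalk])
  have hcentralizer := IsFreeGroup.isCyclic_centralizer_singleton hg
  have hcyclic := Subgroup.isCyclic_of_le (hHsf.realizableSubgroup_le_centralizer hf hvv' γ₀)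
  obtain ⟨r, hr⟩ := (Subgroup.isCyclic_iff_exists_zpowers_eq_top _).mp hcyclic
  have hmem : ∀ ω, Realizable f v ω → ω.word ∈ Subgroup.zpowers r :=
    fun ω hω => hr ▸ ⟨ω, hω, rfl⟩
  by_cases hr1 : r = 1
  · refine Or.inl fun ω hω => hHsf.eqv2_iff_word_eq.mpr ?_
    simpa [hr1] using hmem ω hω
  · have hrS : r ∈ hHsf.realizableSubgroup hf hvv' := hr ▸ Subgroup.mem_zpowers r
    obtain ⟨ω₀, hω₀, hω₀r⟩ := hrS
    refine Or.inr ⟨ω₀, hω₀, fun ω hω => ?_, fun k hk h => hk ?_⟩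
    · obtain ⟨k, hk⟩ := Subgroup.mem_zpowers_iff.mp (hmem ω hω)
      exact ⟨k, hHsf.eqv2_iff_word_eq.mpr (by rw [Walk.word_zpow hHsf.1, hω₀r, hk])⟩
    · rw [hHsf.eqv2_iff_word_eq, Walk.word_zpow hHsf.1, hω₀r, Walk.word_constWalk] at h
      exact (IsMulTorsionFree.zpow_eq_one_iff_right hr1).mp h

theorem statement_12 (G H : Graph') [Finite G.V] [Finite H.V]
    (hGconn : Graph'.Connected G) (hHconn : Graph'.Connected H)
    (hGe : ∃ x y : G.V, G.E x y) (hHe : ∃ x y : H.V, H.E x y)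
    (hHsf : SquareFree H)
    (f : G.V → H.V) (hf : IsGraphHom G H f)
    (v : G.V) (hv : ∃ v' : G.V, G.E v v')
    (hK : ∃ γ₀ : Walk G v v,
      (∀ γ : Walk G v v, ∃ k : ℤ,
        Eqv2 (Walk.map f hf γ) (Walk.zpow (Walk.map f hf γ₀) k)) ∧
      (∀ k : ℤ, k ≠ 0 →
        ¬ Eqv2 (Walk.zpow (Walk.map f hf γ₀) k) (constWalk (f v)))) :
    (∀ ω : Walk H (f v) (f v), Realizable f v ω → Eqv2 ω (constWalk (f v))) ∨
    (∃ ω₀ : Walk H (f v) (f v), Realizable f v ω₀ ∧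
      (∀ ω : Walk H (f v) (f v), Realizable f v ω →
        ∃ k : ℤ, Eqv2 ω (Walk.zpow ω₀ k)) ∧
      (∀ k : ℤ, k ≠ 0 → ¬ Eqv2 (Walk.zpow ω₀ k) (constWalk (f v)))) :=
  statement_12_general G H hHsf f hf v hv hK
end
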